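/- arXiv:1809.07760 — 2 statements merged into one kernel-verified Lean document; each statement's English description precedes it below -/
import Mathlib

section
/- (Residue at a simple pole of the Molien–Weyl integrand.) Let t₁,…,t_r be nonzero complex numbers with |t_k| < 1 for all k, let ℓ ∈ ℤ, fix (K,I) ∈ Λ, let w be a complex a_{K,I}-th root of t_K, let ζ₀ be an a_{K,I}-th root of unity, and set τ = ζ₀·w (so τ^{a_{K,I}} = t_K). Define f(z) = z^{ℓ−1} / ( ∏_{k : d_k even} (1 − t_k) · ∏_{(k,i)∈Λ} (1 − t_k z^{−a_{k,i}})(1 − t_k z^{a_{k,i}}) ). Assume that τ^{a_{k,i}} ≠ t_k for every (k,i) ∈ Λ∖{(K,I)} and that t_k·τ^{a_{k,i}} ≠ 1 for every (k,i) ∈ Λ. Then f has a simple pole at z = τ and lim_{z→τ} (z − τ)·f(z) = τ^{ℓ} / ( a_{K,I}·(1 − t_K²) · ∏_{k : d_k even} (1 − t_k) · ∏_{(k,i)∈Λ∖{(K,I)}} (1 − t_k τ^{−a_{k,i}})(1 − t_k τ^{a_{k,i}}) ). -/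
open MvPolynomial Complex Filter Topology
open scoped TensorProduct

noncomputable section

/-- The group `SU₂`-complexified, i.e. `SL(2,ℂ)`. -/
abbrev SL2 : Type := Matrix.SpecialLinearGroup (Fin 2) ℂ

/-- Substitution action of a `2 × 2` matrix on polynomials in two variables
(binary forms): the variables are replaced by the linear forms determined by `g`. -/
def subAct (g : Matrix (Fin 2) (Fin 2) ℂ) :
    MvPolynomial (Fin 2) ℂ →ₐ[ℂ] MvPolynomial (Fin 2) ℂ :=
  aeval fun s => ∑ s' : Fin 2, g s' s • (X s' : MvPolynomial (Fin 2) ℂ)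

/-- The monomial basis `x^i y^(d-i)` of the space of binary forms of degree `d`. -/
def bmon (d : ℕ) (i : Fin (d + 1)) : MvPolynomial (Fin 2) ℂ :=
  X 0 ^ (i : ℕ) * X 1 ^ (d - (i : ℕ))

/-- Matrix coefficient of the action of `g` on `V_d` in the monomial basis. -/
def repMat (d : ℕ) (g : Matrix (Fin 2) (Fin 2) ℂ) (i j : Fin (d + 1)) : ℂ :=
  coeff (Finsupp.single 0 (i : ℕ) + Finsupp.single 1 (d - (i : ℕ))) (subAct g (bmon d j))

variable {ι : Type} [Fintype ι] [DecidableEq ι]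

/-- The index set `Θ` of all weights of `W = ⊕ₖ V_{d k}`. -/
abbrev Tht (d : ι → ℕ) : Type := (k : ι) × Fin (d k + 1)

/-- The weight `a_{k,i} = 2 i - d k`. -/
def wt (d : ι → ℕ) (p : Tht d) : ℤ := 2 * (p.2 : ℤ) - (d p.1 : ℤ)

/-- The index set `Λ` of the positive weights. -/
abbrev Lam (d : ι → ℕ) : Type := {p : Tht d // d p.1 / 2 < (p.2 : ℕ)}

/-- A positive weight, as a natural number. -/
def pw (d : ι → ℕ) (p : Lam d) : ℕ := 2 * (p.1.2 : ℕ) - d p.1.1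

/-- The action of `SL₂` on the coordinate ring `ℂ[W]`, `W = ⊕ₖ V_{d k}`:
the coordinate functions (indexed by `Θ`) transform dually to the monomial basis
vectors of `W`. -/
def coordAct (d : ι → ℕ) (g : SL2) :
    MvPolynomial (Tht d) ℂ →ₐ[ℂ] MvPolynomial (Tht d) ℂ :=
  aeval fun p => ∑ j : Fin (d p.1 + 1),
    repMat (d p.1) (g⁻¹).1 p.2 j • (X ⟨p.1, j⟩ : MvPolynomial (Tht d) ℂ)

/-- The fixed subspace of `ℂ[W] ⊗ ℂ[x,y]` under the diagonal action of `SL₂`,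
where the action on `ℂ[W]` is given by `act`. -/
def fixedSub (σ : Type) (act : SL2 → (MvPolynomial σ ℂ →ₐ[ℂ] MvPolynomial σ ℂ)) :
    Submodule ℂ (MvPolynomial σ ℂ ⊗[ℂ] MvPolynomial (Fin 2) ℂ) :=
  ⨅ g : SL2, LinearMap.eqLocus
    (TensorProduct.map (act g).toLinearMap (subAct g.1).toLinearMap) LinearMap.id

/-- The subspace `P ⊗ V_L` of `ℂ[W] ⊗ ℂ[x,y]`, where `V_L` is the space of binary forms
of degree `L`. -/
def tensorPiece {σ : Type} (P : Submodule ℂ (MvPolynomial σ ℂ)) (L : ℕ) :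
    Submodule ℂ (MvPolynomial σ ℂ ⊗[ℂ] MvPolynomial (Fin 2) ℂ) :=
  LinearMap.range (TensorProduct.map P.subtype (homogeneousSubmodule (Fin 2) ℂ L).subtype)

/-- `dim (ℂ[W]_n ⊗ V_L)^{SL₂}`. -/
def covDim {σ : Type} (act : SL2 → (MvPolynomial σ ℂ →ₐ[ℂ] MvPolynomial σ ℂ))
    (L n : ℕ) : ℕ :=
  Module.finrank ℂ ↥(tensorPiece (homogeneousSubmodule σ ℂ n) L ⊓ fixedSub σ act)

/-- The univariate Hilbert series of the module of covariants. -/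
def covHilb {σ : Type} (act : SL2 → (MvPolynomial σ ℂ →ₐ[ℂ] MvPolynomial σ ℂ))
    (L : ℕ) (t : ℝ) : ℝ :=
  ∑' n : ℕ, (covDim act L n : ℝ) * t ^ n

/-- `dim ((ℂ[V_{d 1}]_{n 1} ⊗ ⋯ ⊗ ℂ[V_{d r}]_{n r}) ⊗ V_L)^{SL₂}`, the multigraded
piece being cut out by the multidegree `n`. -/
def covDimM (d : ι → ℕ) (L : ℕ) (n : ι → ℕ) : ℕ :=
  Module.finrank ℂ ↥(tensorPiece (weightedHomogeneousSubmodule ℂ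
    (fun p : Tht d => (Pi.single p.1 1 : ι → ℕ)) n) L ⊓ fixedSub (Tht d) (coordAct d))

/-- The multivariate Hilbert series of the module of covariants. -/
def covHilbM (d : ι → ℕ) (L : ℕ) (t : ι → ℝ) : ℝ :=
  ∑' n : ι → ℕ, (covDimM d L n : ℝ) * ∏ k, t k ^ n k

/-- The Schur (Laurent) polynomial associated to a weakly decreasing integer tuple `ρ`,
evaluated at `x`, as a quotient of alternants. -/
def schur {n : ℕ} (ρ : Fin n → ℤ) (x : Fin n → ℝ) : ℝ :=
  Matrix.det (Matrix.of fun i j : Fin n => x i ^ (ρ j + ((n : ℤ) - 1 - (j : ℕ)))) /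
    Matrix.det (Matrix.of fun i j : Fin n => x i ^ ((n : ℤ) - 1 - (j : ℕ)))

/-- The staircase partition `δ = (n-1, n-2, …, 1, 0)`. -/
def deltaP (n : ℕ) : Fin n → ℤ := fun j => (n : ℤ) - 1 - (j : ℕ)

/-- The partition `ρ = (n-3, n-3, n-3, n-4, …, 1, 0)`. -/
def rhoP (n : ℕ) : Fin n → ℤ :=
  fun j => if (j : ℕ) ≤ 1 then (n : ℤ) - 3 else (n : ℤ) - 1 - (j : ℕ)

/-- The partition `ρ' = (n-3, n-4, n-4, n-4, n-5, …, 1, 0)`. -/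
def rhoP' (n : ℕ) : Fin n → ℤ :=
  fun j => if (j : ℕ) = 0 then (n : ℤ) - 3
    else if (j : ℕ) ≤ 2 then (n : ℤ) - 4 else (n : ℤ) - 1 - (j : ℕ)

/-- The tuple of positive weights, enumerated as a tuple indexed by `Fin C`. -/
def aTup (d : ι → ℕ) : Fin (Fintype.card (Lam d)) → ℝ :=
  fun j => (pw d ((Fintype.equivFin (Lam d)).symm j) : ℝ)

/-- The multiset `{d k}` recording the isomorphism class of `W = ⊕ₖ V_{d k}`. -/
def wMulti (d : ι → ℕ) : Multiset ℕ := Multiset.map d Finset.univ.val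

/-- The number of indices `k` with `d k` even. -/
def evenCount (d : ι → ℕ) : ℕ := (Finset.univ.filter fun k => Even (d k)).card

/-- `D = dim_ℂ W = r + Σₖ d k`. -/
def dimW (d : ι → ℕ) : ℕ := Fintype.card ι + ∑ k, d k

/-- The infinitesimal (Lie algebra) action of a `2 × 2` matrix on binary forms. -/
def lieAct (ξ : Matrix (Fin 2) (Fin 2) ℂ) (p : MvPolynomial (Fin 2) ℂ) :
    MvPolynomial (Fin 2) ℂ :=
  ∑ s : Fin 2, (∑ s' : Fin 2, ξ s' s • (X s' : MvPolynomial (Fin 2) ℂ)) * pderiv s p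

/-- Matrix coefficient of the infinitesimal action on `V_d` in the monomial basis. -/
def lieMat (d : ℕ) (ξ : Matrix (Fin 2) (Fin 2) ℂ) (i j : Fin (d + 1)) : ℂ :=
  coeff (Finsupp.single 0 (i : ℕ) + Finsupp.single 1 (d - (i : ℕ))) (lieAct ξ (bmon d j))

/-- The action of `SL₂` on the coordinate ring `ℂ[V ⊕ V*]`, where `V = ⊕ₖ V_{d k}`:
coordinates of type `Sum.inl` are coordinates on `V` (transforming dually to `V`) and
coordinates of type `Sum.inr` are coordinates on `V*` (transforming as `V`). -/
def ctAct (d : ι → ℕ) (g : SL2) :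
    MvPolynomial (Tht (Sum.elim d d)) ℂ →ₐ[ℂ] MvPolynomial (Tht (Sum.elim d d)) ℂ :=
  aeval fun p => match p with
    | ⟨Sum.inl k, i⟩ => ∑ j : Fin (d k + 1),
        repMat (d k) (g⁻¹).1 i j •
          (X (⟨Sum.inl k, j⟩ : Tht (Sum.elim d d)) : MvPolynomial (Tht (Sum.elim d d)) ℂ)
    | ⟨Sum.inr k, i⟩ => ∑ j : Fin (d k + 1),
        repMat (d k) g.1 j i •
          (X (⟨Sum.inr k, j⟩ : Tht (Sum.elim d d)) : MvPolynomial (Tht (Sum.elim d d)) ℂ)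

/-- The component of the complexified moment map `μ(v,φ)(ξ) = φ(ξ·v)` associated
to `ξ ∈ sl₂`, as a quadratic polynomial on `V ⊕ V*`. -/
def momC (d : ι → ℕ) (ξ : Matrix (Fin 2) (Fin 2) ℂ) :
    MvPolynomial (Tht (Sum.elim d d)) ℂ :=
  ∑ k : ι, ∑ i : Fin (d k + 1), ∑ j : Fin (d k + 1),
    lieMat (d k) ξ j i •
      ((X (⟨Sum.inl k, i⟩ : Tht (Sum.elim d d)) : MvPolynomial (Tht (Sum.elim d d)) ℂ) *
        X (⟨Sum.inr k, j⟩ : Tht (Sum.elim d d)))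

/-- The ideal `(μ)` of `ℂ[V ⊕ V*]` generated by the components of the moment map
with respect to the standard basis `E, F, H` of `sl₂`. -/
def momIdeal (d : ι → ℕ) : Ideal (MvPolynomial (Tht (Sum.elim d d)) ℂ) :=
  Ideal.span {momC d !![0,1;0,0], momC d !![0,0;1,0], momC d !![1,0;0,-1]}

/-- The subspace of `SL₂`-invariant polynomials for the action `act`. -/
def invSub (σ : Type) (act : SL2 → (MvPolynomial σ ℂ →ₐ[ℂ] MvPolynomial σ ℂ)) :
    Submodule ℂ (MvPolynomial σ ℂ) :=
  ⨅ g : SL2, LinearMap.eqLocus (act g).toLinearMap LinearMap.id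

/-- The dimension of the degree-`n` component of the invariant ring. -/
def invDim (σ : Type) (act : SL2 → (MvPolynomial σ ℂ →ₐ[ℂ] MvPolynomial σ ℂ)) (n : ℕ) : ℕ :=
  Module.finrank ℂ ↥(invSub σ act ⊓ homogeneousSubmodule σ ℂ n)

/-- The Hilbert series of the invariant ring. -/
def invHilb (σ : Type) (act : SL2 → (MvPolynomial σ ℂ →ₐ[ℂ] MvPolynomial σ ℂ)) (t : ℝ) : ℝ :=
  ∑' n : ℕ, (invDim σ act n : ℝ) * t ^ n

/-- The dimension of the degree-`n` component of the graded algebra of regular functions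
on the symplectic quotient, `ℂ[V⊕V*]^{SL₂}/((μ) ∩ ℂ[V⊕V*]^{SL₂})`: the image of the
degree-`n` invariants in `ℂ[V⊕V*]/(μ)`. -/
def onDim (d : ι → ℕ) (n : ℕ) : ℕ :=
  Module.finrank ℂ ↥(Submodule.map (Submodule.mkQ ((momIdeal d).restrictScalars ℂ))
    (invSub (Tht (Sum.elim d d)) (ctAct d) ⊓ homogeneousSubmodule (Tht (Sum.elim d d)) ℂ n))

/-- The on-shell Hilbert series `Hilb_V^{on}`. -/
def onHilb (d : ι → ℕ) (t : ℝ) : ℝ := ∑' n : ℕ, (onDim d n : ℝ) * t ^ n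

/-!
Write `τ^a = t_K` with `a = a_{K,I}`. For `z ≠ 0`,
`(1 - t z^{-a})(1 - t z^a) = (z^a - t)(1 - t z^a) / z^a`, so near `τ` the integrand is
`g z / (z^a - t_K)` with `g` continuous at `τ`: the hypotheses on `τ` say exactly that no other
factor of the denominator vanishes there. The residue at the simple zero of `z^a - t_K` is then
`g τ / (a τ^{a-1})`, and `τ^a = t_K` turns this into the stated value.
-/

theorem tendsto_sub_mul_div_of_hasDerivAt {𝕜 : Type*} [NontriviallyNormedField 𝕜]
    {g h : 𝕜 → 𝕜} {τ c h' : 𝕜} (hg : Tendsto g (𝓝[≠] τ) (𝓝 c))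
    (hh : HasDerivAt h h' τ) (hτ : h τ = 0) (hh' : h' ≠ 0) :
    Tendsto (fun z => (z - τ) * (g z / h z)) (𝓝[≠] τ) (𝓝 (c / h')) := by
  have hslope : Tendsto (fun z => (h z / (z - τ))⁻¹) (𝓝[≠] τ) (𝓝 h'⁻¹) :=
    ((hasDerivAt_iff_tendsto_slope.mp hh).congr fun z => by
      rw [slope_def_field, hτ, sub_zero]).inv₀ hh'
  rw [div_eq_mul_inv]
  refine (hg.mul hslope).congr fun z => ?_
  simp only [div_eq_mul_inv, mul_inv, inv_inv]
  ring

section weightFactor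

variable {𝕜 : Type*}

def weightFactor [Field 𝕜] (s z : 𝕜) (a : ℕ) : 𝕜 :=
  (1 - s * z ^ (-(a : ℤ))) * (1 - s * z ^ (a : ℤ))

theorem weightFactor_eq [Field 𝕜] (s : 𝕜) {z : 𝕜} (a : ℕ) (hz : z ≠ 0) :
    weightFactor s z a = (z ^ a - s) * (1 - s * z ^ a) / z ^ a := by
  rw [weightFactor, zpow_neg, zpow_natCast]
  field_simp

theorem weightFactor_ne_zero [Field 𝕜] {s z : 𝕜} {a : ℕ} (hz : z ≠ 0)
    (h₁ : z ^ a ≠ s) (h₂ : s * z ^ a ≠ 1) : weightFactor s z a ≠ 0 := by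
  rw [weightFactor_eq s a hz]
  exact div_ne_zero (mul_ne_zero (sub_ne_zero.mpr h₁) (sub_ne_zero.mpr h₂.symm))
    (pow_ne_zero a hz)

theorem continuousAt_weightFactor [NontriviallyNormedField 𝕜] (s : 𝕜) {z : 𝕜} (a : ℕ)
    (hz : z ≠ 0) : ContinuousAt (fun z => weightFactor s z a) z := by
  unfold weightFactor
  fun_prop (disch := exact Or.inl hz)

end weightFactor

theorem pw_pos {κ : Type} {d : κ → ℕ} (p : Lam d) : 0 < pw d p := by
  have := p.2
  simp only [pw]
  omega

open Finset in
theorem tendsto_sub_mul_zpow_div_prod_weightFactor {𝕜 β : Type*} [NontriviallyNormedField 𝕜]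
    [CharZero 𝕜] [Fintype β] [DecidableEq β] {s : β → 𝕜} {a : β → ℕ} {τ : 𝕜} (C : 𝕜)
    (ℓ : ℤ) (P : β) (haP : a P ≠ 0) (hτa : τ ^ a P = s P) (hsP : s P ≠ 0)
    (h₁ : ∀ q, q ≠ P → τ ^ a q ≠ s q) (h₂ : ∀ q, s q * τ ^ a q ≠ 1) :
    Tendsto (fun z => (z - τ) * (z ^ (ℓ - 1) / (C * ∏ q, weightFactor (s q) z (a q))))
      (𝓝[≠] τ)
      (𝓝 (τ ^ ℓ / ((a P : 𝕜) * (1 - s P ^ 2) * C *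
        ∏ q ∈ univ.erase P, weightFactor (s q) τ (a q)))) := by
  have hτ0 : τ ≠ 0 := by
    rintro rfl
    exact hsP (by rw [← hτa, zero_pow haP])
  set R : 𝕜 → 𝕜 := fun z => ∏ q ∈ univ.erase P, weightFactor (s q) z (a q)
  set g : 𝕜 → 𝕜 := fun z => z ^ (ℓ - 1) * z ^ a P / ((1 - s P * z ^ a P) * R z) / C
  have hRτ : R τ ≠ 0 := prod_ne_zero_iff.mpr fun q hq =>
    weightFactor_ne_zero hτ0 (h₁ q (ne_of_mem_erase hq)) (h₂ q)
  have hg : ContinuousAt g τ := by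
    refine ContinuousAt.div_const (ContinuousAt.div (by fun_prop (disch := exact Or.inl hτ0))
      ((continuousAt_const.sub (continuousAt_const.mul (continuousAt_pow _ _))).mul
        (tendsto_finsetProd _ fun q _ => continuousAt_weightFactor (s q) (a q) hτ0))
      (mul_ne_zero (sub_ne_zero.mpr (h₂ P).symm) hRτ)) C
  have hres := tendsto_sub_mul_div_of_hasDerivAt (hg.tendsto.mono_left nhdsWithin_le_nhds)
    ((hasDerivAt_pow (a P) τ).sub_const (s P)) (by rw [hτa, sub_self])
    (mul_ne_zero (Nat.cast_ne_zero.mpr haP) (pow_ne_zero _ hτ0))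
  have hval : g τ / ((a P : 𝕜) * τ ^ (a P - 1)) =
      τ ^ ℓ / ((a P : 𝕜) * (1 - s P ^ 2) * C * R τ) := by
    have hpow : τ ^ (ℓ - 1) * τ ^ a P = τ ^ ℓ * τ ^ (a P - 1) := by
      rw [← zpow_natCast, ← zpow_natCast, ← zpow_add₀ hτ0, ← zpow_add₀ hτ0]
      congr 1
      push_cast [Nat.one_le_iff_ne_zero.mpr haP]
      ring
    simp only [g]
    rw [hpow, hτa, ← sq]
    field_simp
  rw [hval] at hres
  refine hres.congr' ?_
  filter_upwards [eventually_ne_nhdsWithin hτ0] with z hz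
  rw [← mul_prod_erase univ _ (mem_univ P), weightFactor_eq _ _ hz]
  simp only [g, div_eq_mul_inv, mul_inv, inv_inv]
  ring

theorem molien_weyl_simple_pole_residue_general
    (r : ℕ) (d : Fin r → ℕ)
    (t : Fin r → ℂ) (ht0 : ∀ k, t k ≠ 0)
    (ℓ : ℤ) (P : Lam d) (w : ℂ) (hw : w ^ pw d P = t P.1.1)
    (ζ0 : ℂ) (hζ0 : ζ0 ^ pw d P = 1)
    (hτ1 : ∀ q : Lam d, q ≠ P → (ζ0 * w) ^ pw d q ≠ t q.1.1)
    (hτ2 : ∀ q : Lam d, t q.1.1 * (ζ0 * w) ^ pw d q ≠ 1) :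
    Tendsto (fun z : ℂ => (z - ζ0 * w) *
        (z ^ (ℓ - 1) /
          ((∏ k ∈ Finset.univ.filter fun k => Even (d k), (1 - t k)) *
            ∏ q : Lam d,
              ((1 - t q.1.1 * z ^ (-(pw d q : ℤ))) * (1 - t q.1.1 * z ^ (pw d q : ℤ))))))
      (𝓝[≠] (ζ0 * w))
      (𝓝 ((ζ0 * w) ^ ℓ /
        ((pw d P : ℂ) * (1 - t P.1.1 ^ 2) *
          (∏ k ∈ Finset.univ.filter fun k => Even (d k), (1 - t k)) *
          ∏ q ∈ Finset.univ.erase P,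
            ((1 - t q.1.1 * (ζ0 * w) ^ (-(pw d q : ℤ))) *
              (1 - t q.1.1 * (ζ0 * w) ^ (pw d q : ℤ)))))) := by
  have hτa : (ζ0 * w) ^ pw d P = t P.1.1 := by rw [mul_pow, hζ0, hw, one_mul]
  exact tendsto_sub_mul_zpow_div_prod_weightFactor (s := fun q : Lam d => t q.1.1) _ ℓ P
    (pw_pos P).ne' hτa (ht0 _) hτ1 hτ2

/-- **Residue at a simple pole of the Molien–Weyl integrand.**
For nonzero `t₁,…,t_r` of modulus `< 1`, `(K,I) ∈ Λ`, `w` an `a_{K,I}`-th root of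
`t_K` and `ζ₀` an `a_{K,I}`-th root of unity, set `τ = ζ₀ w`. If `τ^{a_{k,i}} ≠ t_k`
for all `(k,i) ∈ Λ∖{(K,I)}` and `t_k τ^{a_{k,i}} ≠ 1` for all `(k,i) ∈ Λ`, then
`(z - τ) f(z)` converges, as `z → τ`, to the stated residue, where
`f(z) = z^{ℓ-1} / (∏_{d_k even} (1 - t_k) ∏_{(k,i)∈Λ} (1 - t_k z^{-a_{k,i}})(1 - t_k z^{a_{k,i}}))`. -/
theorem molien_weyl_simple_pole_residue
    (r : ℕ) (d : Fin r → ℕ) (hd : ∀ k, 1 ≤ d k)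
    (t : Fin r → ℂ) (ht0 : ∀ k, t k ≠ 0) (ht1 : ∀ k, ‖t k‖ < 1)
    (ℓ : ℤ) (P : Lam d) (w : ℂ) (hw : w ^ pw d P = t P.1.1)
    (ζ0 : ℂ) (hζ0 : ζ0 ^ pw d P = 1)
    (hτ1 : ∀ q : Lam d, q ≠ P → (ζ0 * w) ^ pw d q ≠ t q.1.1)
    (hτ2 : ∀ q : Lam d, t q.1.1 * (ζ0 * w) ^ pw d q ≠ 1) :
    Tendsto (fun z : ℂ => (z - ζ0 * w) *
        (z ^ (ℓ - 1) /
          ((∏ k ∈ Finset.univ.filter fun k => Even (d k), (1 - t k)) *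
            ∏ q : Lam d,
              ((1 - t q.1.1 * z ^ (-(pw d q : ℤ))) * (1 - t q.1.1 * z ^ (pw d q : ℤ))))))
      (𝓝[≠] (ζ0 * w))
      (𝓝 ((ζ0 * w) ^ ℓ /
        ((pw d P : ℂ) * (1 - t P.1.1 ^ 2) *
          (∏ k ∈ Finset.univ.filter fun k => Even (d k), (1 - t k)) *
          ∏ q ∈ Finset.univ.erase P,
            ((1 - t q.1.1 * (ζ0 * w) ^ (-(pw d q : ℤ))) *
              (1 - t q.1.1 * (ζ0 * w) ^ (pw d q : ℤ)))))) :=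
  molien_weyl_simple_pole_residue_general r d t ht0 ℓ P w hw ζ0 hζ0 hτ1 hτ2

end
end

section
/- (Residue at zero of the Molien–Weyl integrand as a sum over weighted compositions.) Let t₁,…,t_r be nonzero complex numbers and let ν ≥ 1 be an integer. The function g(z) = ∏_{(k,i)∈Λ} 1 / ( (z^{a_{k,i}} − t_k)(1 − t_k z^{a_{k,i}}) ) is holomorphic on a neighborhood of z = 0, and the coefficient of z^{ν−1} in its Taylor expansion at 0 equals (−1)^C · Σ_{(I,J)∈S} ∏_{(k,i)∈Λ} t_k^{I_{k,i} − J_{k,i} − 1}, where S = {(I_{k,i},J_{k,i})_{(k,i)∈Λ} ∈ ℤ_{≥0}^{2C} : Σ_{(k,i)∈Λ} (I_{k,i}+J_{k,i})·a_{k,i} = ν − 1} is a finite set. -/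
/-! Near `z = 0` each factor is a product of two convergent geometric series,
`((w - t) * (1 - t * w))⁻¹ = -∑_{I,J} t ^ (I - J - 1) * w ^ (I + J)` with `w = z ^ a`,
so the whole product is an absolutely convergent series over pairs `(I, J) ∈ ℕ^Λ × ℕ^Λ`.
Since every `a_p ≥ 1`, only finitely many pairs contribute to each power `z ^ N`, and grouping
them gives the Taylor series of the product at `0`. -/

open MvPolynomial Complex Filter Topology
open scoped TensorProduct

noncomputable section

variable {ι : Type} [Fintype ι] [DecidableEq ι]

theorem HasSum.mul_of_summable_norm {R ι ι' : Type*} [NormedRing R] [CompleteSpace R]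
    {f : ι → R} {g : ι' → R} {s s' : R} (hf : HasSum f s) (hg : HasSum g s')
    (hf' : Summable fun x => ‖f x‖) (hg' : Summable fun x => ‖g x‖) :
    HasSum (fun x : ι × ι' => f x.1 * g x.2) (s * s') :=
  hf.mul hg (summable_mul_of_summable_norm hf' hg')

section ProductSeries

variable {R : Type*} [NormedCommRing R] [CompleteSpace R] {β : Type*}

theorem hasSum_fin_prod_of_summable_norm (n : ℕ) {f : Fin n → β → R} {s : Fin n → R}
    (hs : ∀ i, HasSum (f i) (s i)) (hf : ∀ i, Summable fun b => ‖f i b‖) :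
    HasSum (fun m : Fin n → β => ∏ i, f i (m i)) (∏ i, s i) ∧
      Summable fun m : Fin n → β => ‖∏ i, f i (m i)‖ := by
  induction n with
  | zero =>
    simp only [Finset.univ_eq_empty, Finset.prod_empty]
    exact ⟨by simp, .of_finite⟩
  | succ n ih =>
    obtain ⟨hsTail, hfTail⟩ := ih (fun i => hs i.succ) (fun i => hf i.succ)
    let e := Fin.consEquiv fun _ : Fin (n + 1) => β
    have hcons : ∀ x, ∏ i, f i (e x i) = f 0 x.1 * ∏ i : Fin n, f i.succ (x.2 i) := fun x => by
      simp [e, Fin.prod_univ_succ, Fin.consEquiv]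
    rw [Fin.prod_univ_succ]
    refine ⟨e.hasSum_iff.mp ?_, e.summable_iff.mp ?_⟩
    · exact ((hs 0).mul_of_summable_norm hsTail (hf 0) hfTail).congr_fun hcons
    · exact ((hf 0).mul_norm hfTail).congr fun x => congrArg norm (hcons x).symm

theorem hasSum_pi_prod_of_summable_norm {ι : Type*} [Fintype ι] {f : ι → β → R} {s : ι → R}
    (hs : ∀ i, HasSum (f i) (s i)) (hf : ∀ i, Summable fun b => ‖f i b‖) :
    HasSum (fun m : ι → β => ∏ i, f i (m i)) (∏ i, s i) ∧
      Summable fun m : ι → β => ‖∏ i, f i (m i)‖ := by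
  let e := (Fintype.equivFin ι).symm
  obtain ⟨hsFin, hfFin⟩ := hasSum_fin_prod_of_summable_norm _ (fun j => hs (e j))
    (fun j => hf (e j))
  let E : (ι → β) ≃ (Fin (Fintype.card ι) → β) := e.symm.arrowCongr (Equiv.refl β)
  have hE : ∀ m : ι → β, ∏ j, f (e j) (E m j) = ∏ i, f i (m i) := fun m =>
    e.prod_comp fun i => f i (m i)
  rw [← e.prod_comp s]
  refine ⟨(E.hasSum_iff.mpr hsFin).congr_fun fun m => (hE m).symm,
    (E.summable_iff.mpr hfFin).congr fun m => ?_⟩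
  simp only [Function.comp_apply, hE]

end ProductSeries

theorem hasSum_inv_sub_mul_one_sub {𝕜 : Type*} [NormedField 𝕜] [CompleteSpace 𝕜] {t w : 𝕜}
    (ht : t ≠ 0) (h₁ : ‖t * w‖ < 1) (h₂ : ‖t⁻¹ * w‖ < 1) :
    HasSum (fun x : ℕ × ℕ => -(t ^ ((x.1 : ℤ) - x.2 - 1) * w ^ (x.1 + x.2)))
        ((w - t) * (1 - t * w))⁻¹ ∧
      Summable fun x : ℕ × ℕ => ‖-(t ^ ((x.1 : ℤ) - x.2 - 1) * w ^ (x.1 + x.2))‖ := by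
  have hI := hasSum_geometric_of_norm_lt_one h₁
  have hJ : HasSum (fun J => -t⁻¹ * (t⁻¹ * w) ^ J) (w - t)⁻¹ := by
    have hwt : w - t = -t * (1 - t⁻¹ * w) := by field_simp; ring
    simpa only [hwt, mul_inv, inv_neg] using
      (hasSum_geometric_of_norm_lt_one h₂).mul_left (-t⁻¹)
  have hIn : Summable fun I => ‖(t * w) ^ I‖ := by
    simpa [norm_pow] using summable_geometric_of_lt_one (norm_nonneg _) h₁
  have hJn : Summable fun J => ‖-t⁻¹ * (t⁻¹ * w) ^ J‖ := by
    simpa [norm_pow, norm_mul] using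
      (summable_geometric_of_lt_one (norm_nonneg _) h₂).mul_left ‖t⁻¹‖
  have hterm : ∀ x : ℕ × ℕ, (t * w) ^ x.1 * (-t⁻¹ * (t⁻¹ * w) ^ x.2) =
      -(t ^ ((x.1 : ℤ) - x.2 - 1) * w ^ (x.1 + x.2)) := fun x => by
    rw [zpow_sub₀ ht, zpow_sub₀ ht]
    simp only [zpow_natCast, zpow_one, mul_pow, inv_pow, pow_add]
    field_simp
  rw [mul_inv, mul_comm]
  exact ⟨(hI.mul_of_summable_norm hJ hIn hJn).congr_fun fun x => (hterm x).symm,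
    (hIn.mul_norm hJn).congr fun x => by rw [hterm]⟩

theorem HasSum.tsum_fiber_mul_pow {R β : Type*} [NormedRing R] {f : β → R} {w : β → ℕ}
    {z s : R} (h : HasSum (fun b => f b * z ^ w b) s) (hw : ∀ N, {b | w b = N}.Finite) :
    HasSum (fun N => (∑' b : {b // w b = N}, f b) * z ^ N) s := by
  refine HasSum.sigma ((Equiv.sigmaFiberEquiv w).hasSum_iff.mpr h) fun N => ?_
  have : Finite {b // w b = N} := (hw N).to_subtype
  exact (Summable.of_finite.hasSum.mul_right (z ^ N)).congr_fun fun b => by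
    simp only [Function.comp_apply, Equiv.sigmaFiberEquiv_apply, b.2]

section PowerSeries

variable {𝕜 : Type*} [NontriviallyNormedField 𝕜] {f : 𝕜 → 𝕜} {c : ℕ → 𝕜}

theorem hasFPowerSeriesAt_ofScalars_of_eventually_hasSum
    (h : ∀ᶠ z in 𝓝 0, HasSum (fun N => c N * z ^ N) (f z)) :
    HasFPowerSeriesAt f (FormalMultilinearSeries.ofScalars 𝕜 c) 0 := by
  rw [hasFPowerSeriesAt_iff]
  simpa [FormalMultilinearSeries.coeff_ofScalars, mul_comm] using h

theorem HasFPowerSeriesAt.iteratedDeriv_eq_factorial_mul [CompleteSpace 𝕜] [CharZero 𝕜] {x : 𝕜}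
    (h : HasFPowerSeriesAt f (FormalMultilinearSeries.ofScalars 𝕜 c) x) (n : ℕ) :
    iteratedDeriv n f x = n.factorial * c n := by
  have := congrArg (FormalMultilinearSeries.coeff · n)
    (h.eq_formalMultilinearSeries h.analyticAt.hasFPowerSeriesAt)
  simp only [FormalMultilinearSeries.coeff_ofScalars] at this
  rw [this, mul_div_cancel₀ _ (by exact_mod_cast n.factorial_ne_zero)]

end PowerSeries

theorem eventually_norm_mul_pow_lt_one {𝕜 : Type*} [NormedField 𝕜] {k : ℕ} (hk : 0 < k)
    (u : 𝕜) : ∀ᶠ z in 𝓝 (0 : 𝕜), ‖u * z ^ k‖ < 1 := by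
  have : Tendsto (fun z : 𝕜 => u * z ^ k) (𝓝 0) (𝓝 0) :=
    (by fun_prop : Continuous fun z : 𝕜 => u * z ^ k).tendsto' 0 0 (by simp [hk.ne'])
  simpa using this.norm.eventually (gt_mem_nhds (show ‖(0 : 𝕜)‖ < 1 by simp))

section WeightedCompositions

variable {Λ : Type*} [Fintype Λ] {a : Λ → ℕ}

theorem finite_setOf_sum_add_mul_eq (ha : ∀ p, 1 ≤ a p) (N : ℕ) :
    {IJ : (Λ → ℕ) × (Λ → ℕ) | ∑ p, (IJ.1 p + IJ.2 p) * a p = N}.Finite := by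
  have hbox := Set.Finite.pi' fun _ : Λ => Set.finite_Iic N
  refine (hbox.prod hbox).subset ?_
  rintro ⟨I, J⟩ h
  have hle : ∀ p, I p + J p ≤ N := fun p => calc
    I p + J p ≤ (I p + J p) * a p := Nat.le_mul_of_pos_right _ (ha p)
    _ ≤ N := h ▸ Finset.single_le_sum (fun q _ => Nat.zero_le ((I q + J q) * a q))
      (Finset.mem_univ p)
  exact ⟨fun p => (Nat.le_add_right _ _).trans (hle p),
    fun p => (Nat.le_add_left _ _).trans (hle p)⟩

variable {𝕜 : Type*} [NormedField 𝕜] [CompleteSpace 𝕜] {T : Λ → 𝕜}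

theorem hasSum_prod_inv_sub_mul_one_sub (ha : ∀ p, 1 ≤ a p) (hT : ∀ p, T p ≠ 0) {z : 𝕜}
    (hz₁ : ∀ p, ‖T p * z ^ a p‖ < 1) (hz₂ : ∀ p, ‖(T p)⁻¹ * z ^ a p‖ < 1) :
    HasSum (fun N => ((-1) ^ Fintype.card Λ *
        ∑' IJ : {IJ : (Λ → ℕ) × (Λ → ℕ) // ∑ p, (IJ.1 p + IJ.2 p) * a p = N},
          ∏ p, T p ^ ((IJ.1.1 p : ℤ) - (IJ.1.2 p : ℤ) - 1)) * z ^ N)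
      (∏ p, ((z ^ a p - T p) * (1 - T p * z ^ a p))⁻¹) := by
  have hfac p := hasSum_inv_sub_mul_one_sub (hT p) (hz₁ p) (hz₂ p)
  have hpi := (hasSum_pi_prod_of_summable_norm (fun p => (hfac p).1) (fun p => (hfac p).2)).1
  have hIJ := (Equiv.arrowProdEquivProdArrow Λ (fun _ => ℕ) (fun _ => ℕ)).symm.hasSum_iff.mpr hpi
  have hterm : ∀ IJ : (Λ → ℕ) × (Λ → ℕ),
      ∏ p, -(T p ^ ((IJ.1 p : ℤ) - IJ.2 p - 1) * (z ^ a p) ^ (IJ.1 p + IJ.2 p)) =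
        ((-1) ^ Fintype.card Λ * ∏ p, T p ^ ((IJ.1 p : ℤ) - (IJ.2 p : ℤ) - 1)) *
          z ^ ∑ p, (IJ.1 p + IJ.2 p) * a p := fun IJ => by
    simp only [Finset.prod_neg, Finset.prod_mul_distrib, Finset.card_univ, ← pow_mul,
      Finset.prod_pow_eq_pow_sum, mul_comm (a _), mul_assoc]
  have := (hIJ.congr_fun fun IJ => (hterm IJ).symm).tsum_fiber_mul_pow
    (finite_setOf_sum_add_mul_eq ha)
  simpa only [tsum_mul_left] using this

theorem hasFPowerSeriesAt_prod_inv_sub_mul_one_sub {𝕜 : Type*} [NontriviallyNormedField 𝕜]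
    [CompleteSpace 𝕜] {T : Λ → 𝕜} (ha : ∀ p, 1 ≤ a p) (hT : ∀ p, T p ≠ 0) :
    HasFPowerSeriesAt (fun z => ∏ p, ((z ^ a p - T p) * (1 - T p * z ^ a p))⁻¹)
      (FormalMultilinearSeries.ofScalars 𝕜 fun N => (-1) ^ Fintype.card Λ *
        ∑' IJ : {IJ : (Λ → ℕ) × (Λ → ℕ) // ∑ p, (IJ.1 p + IJ.2 p) * a p = N},
          ∏ p, T p ^ ((IJ.1.1 p : ℤ) - (IJ.1.2 p : ℤ) - 1)) 0 := by
  have hsmall (U : Λ → 𝕜) : ∀ᶠ z in 𝓝 0, ∀ p, ‖U p * z ^ a p‖ < 1 :=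
    eventually_all.2 fun p => eventually_norm_mul_pow_lt_one (ha p) (U p)
  refine hasFPowerSeriesAt_ofScalars_of_eventually_hasSum ?_
  filter_upwards [hsmall T, hsmall fun p => (T p)⁻¹] with z hz₁ hz₂
    using hasSum_prod_inv_sub_mul_one_sub ha hT hz₁ hz₂

end WeightedCompositions

theorem one_le_pw {κ : Type} (d : κ → ℕ) (p : Lam d) : 1 ≤ pw d p := by
  have hp : d p.1.1 / 2 < p.1.2 := p.2
  have := Nat.div_add_mod (d p.1.1) 2
  unfold pw
  omega

theorem molien_weyl_residue_at_zero_general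
    (r : ℕ) (d : Fin r → ℕ)
    (t : Fin r → ℂ) (ht0 : ∀ k, t k ≠ 0) (ν : ℕ) :
    {IJ : (Lam d → ℕ) × (Lam d → ℕ) |
        ∑ p : Lam d, (IJ.1 p + IJ.2 p) * pw d p = ν - 1}.Finite ∧
    AnalyticAt ℂ
      (fun z : ℂ => ∏ p : Lam d,
        ((z ^ pw d p - t p.1.1) * (1 - t p.1.1 * z ^ pw d p))⁻¹) 0 ∧
    iteratedDeriv (ν - 1)
        (fun z : ℂ => ∏ p : Lam d,
          ((z ^ pw d p - t p.1.1) * (1 - t p.1.1 * z ^ pw d p))⁻¹) 0 =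
      (Nat.factorial (ν - 1) : ℂ) *
        ((-1 : ℂ) ^ Fintype.card (Lam d) *
          ∑' IJ : {IJ : (Lam d → ℕ) × (Lam d → ℕ) //
              ∑ p : Lam d, (IJ.1 p + IJ.2 p) * pw d p = ν - 1},
            ∏ p : Lam d, t p.1.1 ^ ((IJ.1.1 p : ℤ) - (IJ.1.2 p : ℤ) - 1)) := by
  have hpw := one_le_pw d
  have hseries := hasFPowerSeriesAt_prod_inv_sub_mul_one_sub hpw fun p => ht0 p.1.1
  exact ⟨finite_setOf_sum_add_mul_eq hpw _, hseries.analyticAt,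
    hseries.iteratedDeriv_eq_factorial_mul _⟩

/-- **Residue at zero of the Molien–Weyl integrand as a sum over weighted compositions.**
For nonzero `t₁,…,t_r` and `ν ≥ 1`, the set `S` of nonnegative integer solutions of
`Σ_{(k,i)∈Λ} (I_{k,i}+J_{k,i}) a_{k,i} = ν - 1` is finite, the function
`g(z) = ∏_{(k,i)∈Λ} ((z^{a_{k,i}} - t_k)(1 - t_k z^{a_{k,i}}))⁻¹` is holomorphic near
`z = 0`, and the coefficient of `z^{ν-1}` in its Taylor expansion at `0` equals
`(-1)^C Σ_{(I,J)∈S} ∏_{(k,i)∈Λ} t_k^{I_{k,i}-J_{k,i}-1}`. -/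
theorem molien_weyl_residue_at_zero
    (r : ℕ) (d : Fin r → ℕ) (hd : ∀ k, 1 ≤ d k)
    (t : Fin r → ℂ) (ht0 : ∀ k, t k ≠ 0) (ν : ℕ) (hν : 1 ≤ ν) :
    {IJ : (Lam d → ℕ) × (Lam d → ℕ) |
        ∑ p : Lam d, (IJ.1 p + IJ.2 p) * pw d p = ν - 1}.Finite ∧
    AnalyticAt ℂ
      (fun z : ℂ => ∏ p : Lam d,
        ((z ^ pw d p - t p.1.1) * (1 - t p.1.1 * z ^ pw d p))⁻¹) 0 ∧
    iteratedDeriv (ν - 1)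
        (fun z : ℂ => ∏ p : Lam d,
          ((z ^ pw d p - t p.1.1) * (1 - t p.1.1 * z ^ pw d p))⁻¹) 0 =
      (Nat.factorial (ν - 1) : ℂ) *
        ((-1 : ℂ) ^ Fintype.card (Lam d) *
          ∑' IJ : {IJ : (Lam d → ℕ) × (Lam d → ℕ) //
              ∑ p : Lam d, (IJ.1 p + IJ.2 p) * pw d p = ν - 1},
            ∏ p : Lam d, t p.1.1 ^ ((IJ.1.1 p : ℤ) - (IJ.1.2 p : ℤ) - 1)) :=
  molien_weyl_residue_at_zero_general r d t ht0 ν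

end
end
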